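/- arXiv:1404.1184 — 8 statements merged into one kernel-verified Lean document; each statement's English description precedes it below -/
import Mathlib

section
/- The Jacobian of the Malthus ecoepidemic system evaluated at the equilibrium E₁ = (0, r/b, 0, μ/l) has eigenvalues i√(μr), -i√(μr), (βr - νb)/b, and (rf - bτ)/b. -/
/-!
At `E₁` the `P` and `I` rows of the Jacobian are diagonal, contributing the eigenvalues
`(rf - bτ)/b` and `(βr - νb)/b`, while `S` and `V` are coupled only through the
antidiagonal block `!![0, lr/b; -bμ/l, 0]`, whose characteristic polynomial `X² + μr` has the
roots `±i√(μr)`.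
-/

open Polynomial

noncomputable def malthusRHS (g f τ l β q μ c ν r b : ℝ) (x : Fin 4 → ℝ) : Fin 4 → ℝ :=
  ![x 0 * (g * x 2 + f * x 1 - τ),
    x 1 * (l * x 3 - β * x 2 - q * x 0 - μ),
    x 2 * (β * x 1 - c * x 0 - ν),
    x 3 * (r - b * x 1)]

noncomputable def malthusJac (g f τ l β q μ c ν r b : ℝ) (x : Fin 4 → ℝ) :
    Matrix (Fin 4) (Fin 4) ℝ :=
  Matrix.of ![
    ![g * x 2 + f * x 1 - τ, f * x 0, g * x 0, 0],
    ![-(q * x 1), l * x 3 - β * x 2 - q * x 0 - μ, -(β * x 1), l * x 1],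
    ![-(c * x 2), β * x 2, β * x 1 - c * x 0 - ν, 0],
    ![0, -(b * x 3), 0, r - b * x 1]]

/-- Swapping coordinates `1` and `2` makes the matrix block lower triangular, with the
antidiagonal block `!![0, u; v, 0]` on coordinates `1, 3`. -/
theorem Matrix.charpoly_fin_four_antidiagonal_block {R : Type*} [CommRing R] (a p s u d v : R) :
    !![a, 0, 0, 0; p, 0, s, u; 0, 0, d, 0; 0, v, 0, 0].charpoly =
      (X ^ 2 - C (u * v)) * (X - C d) * (X - C a) := by
  simp [Matrix.charpoly, Matrix.det_succ_row_zero, Fin.sum_univ_succ, Matrix.charmatrix_apply]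
  ring

theorem malthusJac_E1 (g f τ l β q μ c ν r b : ℝ) (hl : l ≠ 0) (hb : b ≠ 0) :
    malthusJac g f τ l β q μ c ν r b ![0, r / b, 0, μ / l] =
      !![(r * f - b * τ) / b, 0, 0, 0;
        -(q * (r / b)), 0, -(β * (r / b)), l * (r / b);
        0, 0, (β * r - ν * b) / b, 0;
        0, -(b * (μ / l)), 0, 0] := by
  ext i j
  fin_cases i <;> fin_cases j <;> simp [malthusJac] <;> field_simp <;> ring

theorem X_sq_add_C_sq_eq_mul (s : ℂ) :
    (X ^ 2 + C (s ^ 2) : ℂ[X]) = (X - C (Complex.I * s)) * (X - C (-(Complex.I * s))) := by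
  have : C (s ^ 2) = -C (Complex.I * s) ^ 2 := by
    rw [← C_pow, ← C_neg, mul_pow, Complex.I_sq]; ring_nf
  rw [this, C_neg]; ring

theorem stmt2_general (g f τ l β q μ c ν r b : ℝ)
    (hl : 0 < l) (hμ : 0 < μ) (hr : 0 < r) (hb : 0 < b) :
    ((malthusJac g f τ l β q μ c ν r b ![0, r / b, 0, μ / l]).map
        (Complex.ofReal)).charpoly =
      (X - C (Complex.I * Real.sqrt (μ * r))) *
      (X - C (-(Complex.I * Real.sqrt (μ * r)))) *
      (X - C (((β * r - ν * b) / b : ℝ) : ℂ)) *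
      (X - C (((r * f - b * τ) / b : ℝ) : ℂ)) := by
  have hLM : l * (r / b) * -(b * (μ / l)) = -Real.sqrt (μ * r) ^ 2 := by
    rw [Real.sq_sqrt (by positivity)]; field_simp
  rw [← X_sq_add_C_sq_eq_mul]
  change ((malthusJac g f τ l β q μ c ν r b _).map Complex.ofRealHom).charpoly = _
  rw [Matrix.charpoly_map, malthusJac_E1 _ _ _ _ _ _ _ _ _ _ _ hl.ne' hb.ne',
    Matrix.charpoly_fin_four_antidiagonal_block, hLM]
  simp

theorem stmt2 (g f τ l β q μ c ν r b : ℝ)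
    (hg : 0 < g) (hf : 0 < f) (hτ : 0 < τ) (hl : 0 < l) (hβ : 0 < β)
    (hq : 0 < q) (hμ : 0 < μ) (hc : 0 < c) (hν : 0 < ν) (hr : 0 < r) (hb : 0 < b) :
    ((malthusJac g f τ l β q μ c ν r b ![0, r / b, 0, μ / l]).map
        (Complex.ofReal)).charpoly =
      (X - C (Complex.I * Real.sqrt (μ * r))) *
      (X - C (-(Complex.I * Real.sqrt (μ * r)))) *
      (X - C (((β * r - ν * b) / b : ℝ) : ℂ)) *
      (X - C (((r * f - b * τ) / b : ℝ) : ℂ)) :=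
  stmt2_general g f τ l β q μ c ν r b hl hμ hr hb
end

section
/- If rβ < bν and rf < bτ, then the Jacobian of the Malthus ecoepidemic system at E₁ = (0, r/b, 0, μ/l) has two purely imaginary eigenvalues ±i√(μr) and two real negative eigenvalues (βr - νb)/b and (rf - bτ)/b. -/
open Polynomial

/-! At `E₁` the rows of the Jacobian belonging to the predators `P` and the infected `I` vanish
off the diagonal, so their diagonal entries `(rf - bτ)/b` and `(βr - νb)/b` split off the
characteristic polynomial. What remains is the `S`–`V` block of a Lotka–Volterra centre: trace `0`
and determinant `μr`, hence the factor `X² + μr` with roots `±i√(μr)`. -/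

theorem Matrix.charpoly_fin_four_of_diagonal_rows_zero_two {R : Type*} [CommRing R]
    (a p d s e c u h v k : R) :
    (Matrix.of ![![a, 0, 0, 0], ![p, d, s, e], ![0, 0, c, 0], ![u, h, v, k]]).charpoly =
      (X - C a) * (X - C c) * (X ^ 2 - C (d + k) * X + C (d * k - e * h)) := by
  simp [Matrix.charpoly, Matrix.det_succ_row_zero, Fin.sum_univ_succ, Matrix.charmatrix_apply,
    Fin.succAbove, Matrix.submatrix_apply]
  ring

theorem malthusJac_boundaryEquilibrium (g f τ l β q μ c ν r b : ℝ) (hl : l ≠ 0) (hb : b ≠ 0) :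
    malthusJac g f τ l β q μ c ν r b ![0, r / b, 0, μ / l] =
      Matrix.of ![![(r * f - b * τ) / b, 0, 0, 0],
        ![-(q * (r / b)), 0, -(β * (r / b)), l * (r / b)],
        ![0, 0, (β * r - ν * b) / b, 0],
        ![0, -(b * (μ / l)), 0, 0]] := by
  ext i j
  fin_cases i <;> fin_cases j <;> simp [malthusJac] <;> field_simp <;> ring

theorem Complex.X_sq_add_C_eq_mul (a : ℝ) (ha : 0 ≤ a) :
    (X ^ 2 + C (a : ℂ) : ℂ[X]) =
      (X - C (Complex.I * Real.sqrt a)) * (X - C (-(Complex.I * Real.sqrt a))) := by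
  have hsq : ((Real.sqrt a : ℂ)) ^ 2 = a := by exact_mod_cast Real.sq_sqrt ha
  have : (C (Complex.I * Real.sqrt a)) ^ 2 = - C (a : ℂ) := by
    rw [← C_pow, mul_pow, Complex.I_sq, hsq, C_mul, C_neg, C_1]; ring
  rw [C_neg]
  linear_combination this

theorem malthusJac_boundaryEquilibrium_charpoly (g f τ l β q μ c ν r b : ℝ)
    (hl : l ≠ 0) (hb : b ≠ 0) :
    (malthusJac g f τ l β q μ c ν r b ![0, r / b, 0, μ / l]).charpoly =
      (X - C ((r * f - b * τ) / b)) * (X - C ((β * r - ν * b) / b)) * (X ^ 2 + C (μ * r)) := by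
  have hdet : 0 * 0 - l * (r / b) * -(b * (μ / l)) = μ * r := by field_simp; ring
  rw [malthusJac_boundaryEquilibrium g f τ l β q μ c ν r b hl hb,
    Matrix.charpoly_fin_four_of_diagonal_rows_zero_two, hdet, add_zero, C_0, zero_mul,
    sub_zero]

theorem stmt3_general (g f τ l β q μ c ν r b : ℝ)
    (hl : 0 < l) (hμ : 0 < μ) (hr : 0 < r) (hb : 0 < b)
    (h1 : r * β < b * ν) (h2 : r * f < b * τ) :
    ((malthusJac g f τ l β q μ c ν r b ![0, r / b, 0, μ / l]).map
        (Complex.ofReal)).charpoly =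
      (X - C (Complex.I * Real.sqrt (μ * r))) *
      (X - C (-(Complex.I * Real.sqrt (μ * r)))) *
      (X - C (((β * r - ν * b) / b : ℝ) : ℂ)) *
      (X - C (((r * f - b * τ) / b : ℝ) : ℂ)) ∧
    (Complex.I * Real.sqrt (μ * r)).re = 0 ∧ (Complex.I * Real.sqrt (μ * r)).im ≠ 0 ∧
    (β * r - ν * b) / b < 0 ∧ (r * f - b * τ) / b < 0 := by
  refine ⟨?_, by simp, by simpa using by positivity, div_neg_of_neg_of_pos (by linarith) hb,
    div_neg_of_neg_of_pos (by linarith) hb⟩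
  rw [show Complex.ofReal = ⇑Complex.ofRealHom from rfl, Matrix.charpoly_map,
    malthusJac_boundaryEquilibrium_charpoly g f τ l β q μ c ν r b hl.ne' hb.ne']
  simp only [Polynomial.map_mul, Polynomial.map_sub, Polynomial.map_add, Polynomial.map_pow,
    map_X, map_C, Complex.ofRealHom_eq_coe]
  rw [Complex.X_sq_add_C_eq_mul (μ * r) (by positivity)]
  ring

theorem stmt3 (g f τ l β q μ c ν r b : ℝ)
    (hg : 0 < g) (hf : 0 < f) (hτ : 0 < τ) (hl : 0 < l) (hβ : 0 < β)
    (hq : 0 < q) (hμ : 0 < μ) (hc : 0 < c) (hν : 0 < ν) (hr : 0 < r) (hb : 0 < b)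
    (h1 : r * β < b * ν) (h2 : r * f < b * τ) :
    ((malthusJac g f τ l β q μ c ν r b ![0, r / b, 0, μ / l]).map
        (Complex.ofReal)).charpoly =
      (X - C (Complex.I * Real.sqrt (μ * r))) *
      (X - C (-(Complex.I * Real.sqrt (μ * r)))) *
      (X - C (((β * r - ν * b) / b : ℝ) : ℂ)) *
      (X - C (((r * f - b * τ) / b : ℝ) : ℂ)) ∧
    (Complex.I * Real.sqrt (μ * r)).re = 0 ∧ (Complex.I * Real.sqrt (μ * r)).im ≠ 0 ∧
    (β * r - ν * b) / b < 0 ∧ (r * f - b * τ) / b < 0 :=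
  stmt3_general g f τ l β q μ c ν r b hl hμ hr hb h1 h2
end

section
/- The point E* = ((βr - νb)/(bc), r/b, (bτ - rf)/(gb), (βrgq - βrfc + bgμc - bgqν + bτβc)/(gbcl)) is an equilibrium of the Malthus ecoepidemic system, i.e., all four right-hand sides vanish at this point. -/
open Polynomial

/-!
E* is the coexistence equilibrium: all four per-capita growth rates vanish there. The rate of V
forces S = r/b, then the rate of I determines P, the rate of P determines I, and finally the rate
of S determines V.
-/

theorem malthusRHS_eq_zero_of_rates_eq_zero {g f τ l β q μ c ν r b : ℝ} {x : Fin 4 → ℝ}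
    (hP : g * x 2 + f * x 1 - τ = 0) (hS : l * x 3 - β * x 2 - q * x 0 - μ = 0)
    (hI : β * x 1 - c * x 0 - ν = 0) (hV : r - b * x 1 = 0) :
    malthusRHS g f τ l β q μ c ν r b x = 0 := by
  ext i
  fin_cases i <;> simp [malthusRHS, hP, hS, hI, hV]

theorem stmt4_general (g f τ l β q μ c ν r b : ℝ)
    (hg : 0 < g) (hl : 0 < l)
    (hc : 0 < c) (hb : 0 < b) :
    malthusRHS g f τ l β q μ c ν r b
      ![(β * r - ν * b) / (b * c), r / b, (b * τ - r * f) / (g * b),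
        (β * r * g * q - β * r * f * c + b * g * μ * c - b * g * q * ν + b * τ * β * c) /
          (g * b * c * l)] = 0 := by
  have := hg.ne'
  have := hl.ne'
  have := hc.ne'
  have := hb.ne'
  apply malthusRHS_eq_zero_of_rates_eq_zero <;>
    simp only [Matrix.cons_val] <;> field_simp <;> ring

theorem stmt4 (g f τ l β q μ c ν r b : ℝ)
    (hg : 0 < g) (hf : 0 < f) (hτ : 0 < τ) (hl : 0 < l) (hβ : 0 < β)
    (hq : 0 < q) (hμ : 0 < μ) (hc : 0 < c) (hν : 0 < ν) (hr : 0 < r) (hb : 0 < b) :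
    malthusRHS g f τ l β q μ c ν r b
      ![(β * r - ν * b) / (b * c), r / b, (b * τ - r * f) / (g * b),
        (β * r * g * q - β * r * f * c + b * g * μ * c - b * g * q * ν + b * τ * β * c) /
          (g * b * c * l)] = 0 :=
  stmt4_general g f τ l β q μ c ν r b hg hl hc hb
end

section
/- The characteristic polynomial of the Jacobian of the Malthus ecoepidemic system at the coexistence equilibrium E* has vanishing coefficient of λ³ (i.e., the trace of the Jacobian at E* is zero); consequently the Jacobian at E* cannot have all eigenvalues with negative real part, so E* is not linearly asymptotically stable. -/
/-!
Every diagonal entry of the Jacobian is the per-capita growth rate of one population (the model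
has no intraspecific interaction terms), and E* is exactly where all four rates vanish, so the
trace at E* is zero. As the trace is the sum of the eigenvalues, their real parts cannot all be
negative.
-/

open Polynomial

theorem Matrix.exists_mem_roots_charpoly_re_nonneg {n : Type*} [Fintype n] [DecidableEq n]
    [Nonempty n] (A : Matrix n n ℂ) (hA : 0 ≤ A.trace.re) :
    ∃ z ∈ A.charpoly.roots, 0 ≤ z.re := by
  by_contra! hneg
  have hroots : A.charpoly.roots ≠ 0 := by
    rw [← Multiset.card_pos, IsAlgClosed.card_roots_eq_natDegree,
      Matrix.charpoly_natDegree_eq_dim]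
    exact Fintype.card_pos
  have hsum : (A.charpoly.roots.map Complex.re).sum < 0 := by
    simpa using Multiset.sum_lt_sum_of_nonempty hroots hneg
  have hre : A.trace.re = (A.charpoly.roots.map Complex.re).sum := by
    rw [Matrix.trace_eq_sum_roots_charpoly]
    exact map_multiset_sum Complex.reAddGroupHom _
  linarith

theorem malthusJac_diag_eq_zero {g f τ l β q μ c ν r b : ℝ}
    (hg : g ≠ 0) (hl : l ≠ 0) (hc : c ≠ 0) (hb : b ≠ 0) :
    (malthusJac g f τ l β q μ c ν r b ![(β * r - ν * b) / (b * c), r / b,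
      (b * τ - r * f) / (g * b),
      (β * r * g * q - β * r * f * c + b * g * μ * c - b * g * q * ν + b * τ * β * c) /
        (g * b * c * l)]).diag = 0 := by
  funext i
  fin_cases i <;> simp [malthusJac] <;> field_simp <;> ring

theorem stmt7_general (g f τ l β q μ c ν r b : ℝ)
    (hg : 0 < g) (hl : 0 < l) (hc : 0 < c) (hb : 0 < b)
    (Estar : Fin 4 → ℝ)
    (hE : Estar = ![(β * r - ν * b) / (b * c), r / b, (b * τ - r * f) / (g * b),
      (β * r * g * q - β * r * f * c + b * g * μ * c - b * g * q * ν + b * τ * β * c) /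
        (g * b * c * l)]) :
    Matrix.trace (malthusJac g f τ l β q μ c ν r b Estar) = 0 ∧
    ¬ (∀ z ∈ ((malthusJac g f τ l β q μ c ν r b Estar).map
        (Complex.ofReal)).charpoly.roots, z.re < 0) := by
  have htrace : (malthusJac g f τ l β q μ c ν r b Estar).trace = 0 := by
    rw [Matrix.trace, hE, malthusJac_diag_eq_zero hg.ne' hl.ne' hc.ne' hb.ne']
    simp
  refine ⟨htrace, fun hneg => ?_⟩
  obtain ⟨z, hz, hre⟩ := Matrix.exists_mem_roots_charpoly_re_nonneg
    ((malthusJac g f τ l β q μ c ν r b Estar).map Complex.ofReal)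
    (by erw [← AddMonoidHom.map_trace Complex.ofRealHom, htrace]; simp)
  exact (hneg z hz).not_ge hre

theorem stmt7 (g f τ l β q μ c ν r b : ℝ)
    (hg : 0 < g) (hf : 0 < f) (hτ : 0 < τ) (hl : 0 < l) (hβ : 0 < β)
    (hq : 0 < q) (hμ : 0 < μ) (hc : 0 < c) (hν : 0 < ν) (hr : 0 < r) (hb : 0 < b)
    (Estar : Fin 4 → ℝ)
    (hE : Estar = ![(β * r - ν * b) / (b * c), r / b, (b * τ - r * f) / (g * b),
      (β * r * g * q - β * r * f * c + b * g * μ * c - b * g * q * ν + b * τ * β * c) /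
        (g * b * c * l)])
    (hpos : ∀ i, 0 < Estar i) :
    Matrix.trace (malthusJac g f τ l β q μ c ν r b Estar) = 0 ∧
    ¬ (∀ z ∈ ((malthusJac g f τ l β q μ c ν r b Estar).map
        (Complex.ofReal)).charpoly.roots, z.re < 0) :=
  stmt7_general g f τ l β q μ c ν r b hg hl hc hb Estar hE
end

section
/- Trajectories of the logistic ecoepidemic system are bounded: for any solution with nonnegative initial data, setting W = P + S + I + V and θ = min{τ, μ, ν} > 0, one has W' + θW ≤ Ψ* where Ψ* = (r + θ)²K/(4r), and consequently W(t) ≤ max{W(0), Ψ*/θ} for all t ≥ 0. -/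
/-!
Adding the four equations, the predation and infection terms combine into
`(g - c) P I + (f - q) P S + (l - b) S V ≤ 0`, and the linear death terms are bounded by
`-θ (P + S + I)`. What remains of `W' + θ W` is the concave quadratic `(r + θ) V - r V² / K`,
whose maximum is `Ψ*`. Grönwall's inequality for `W' ≤ -θ W + Ψ*` bounds `W t` by a convex
combination of `W 0` and `Ψ* / θ`.
-/

open Real

theorem le_max_of_hasDerivAt_add_mul_le {f f' : ℝ → ℝ} {a θ A : ℝ} (hθ : 0 < θ)
    (hf : ∀ t, a ≤ t → HasDerivAt f (f' t) t) (hbound : ∀ t, a ≤ t → f' t + θ * f t ≤ A)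
    {t : ℝ} (ht : a ≤ t) : f t ≤ max (f a) (A / θ) := by
  have hgronwall : f t ≤ gronwallBound (f a) (-θ) A (t - a) :=
    le_gronwallBound_of_liminf_deriv_right_le
      (fun x hx => (hf x hx.1).continuousAt.continuousWithinAt)
      (fun x hx _ hr => (hf x hx.1).hasDerivWithinAt.liminf_right_slope_le hr) le_rfl
      (fun x hx => by linarith [hbound x hx.1]) t ⟨ht, le_rfl⟩
  set e := exp (-θ * (t - a))
  have he : e ≤ 1 := exp_le_one_iff.2 (by nlinarith)
  have hcomb : gronwallBound (f a) (-θ) A (t - a) = e * f a + (1 - e) * (A / θ) := by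
    rw [gronwallBound_of_K_ne_0 (neg_ne_zero.2 hθ.ne'), div_neg]
    ring
  calc f t ≤ e * f a + (1 - e) * (A / θ) := hcomb ▸ hgronwall
    _ ≤ e * max (f a) (A / θ) + (1 - e) * max (f a) (A / θ) := by
        gcongr
        · exact le_max_left _ _
        · exact le_max_right _ _
    _ = max (f a) (A / θ) := by ring

theorem mul_sub_mul_sq_div_le (a v : ℝ) {r K : ℝ} (hr : 0 < r) (hK : 0 < K) :
    a * v - r * v ^ 2 / K ≤ a ^ 2 * K / (4 * r) := by
  have hsq : a ^ 2 * K / (4 * r) - (a * v - r * v ^ 2 / K) =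
      (2 * r * v - a * K) ^ 2 / (4 * r * K) := by
    field_simp
    ring
  linarith [show 0 ≤ (2 * r * v - a * K) ^ 2 / (4 * r * K) by positivity]

theorem ecoepidemic_total_rate_add_mul_le {g f τ l β q μ c ν r b K θ p s i v : ℝ}
    (hgc : g ≤ c) (hfq : f ≤ q) (hlb : l ≤ b) (hθτ : θ ≤ τ) (hθμ : θ ≤ μ) (hθν : θ ≤ ν)
    (hr : 0 < r) (hK : 0 < K) (hp : 0 ≤ p) (hs : 0 ≤ s) (hi : 0 ≤ i) (hv : 0 ≤ v) :
    p * (g * i + f * s - τ) + s * (l * v - β * i - q * p - μ) + i * (β * s - c * p - ν) +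
        v * (r * (1 - v / K) - b * s) + θ * (p + s + i + v) ≤
      (r + θ) ^ 2 * K / (4 * r) := by
  have hregroup : p * (g * i + f * s - τ) + s * (l * v - β * i - q * p - μ) +
      i * (β * s - c * p - ν) + v * (r * (1 - v / K) - b * s) + θ * (p + s + i + v) =
      (g - c) * (p * i) + (f - q) * (p * s) + (l - b) * (s * v) +
        (θ - τ) * p + (θ - μ) * s + (θ - ν) * i + ((r + θ) * v - r * v ^ 2 / K) := by
    ring
  have hpi : (g - c) * (p * i) ≤ 0 := mul_nonpos_of_nonpos_of_nonneg (by linarith) (by positivity)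
  have hps : (f - q) * (p * s) ≤ 0 := mul_nonpos_of_nonpos_of_nonneg (by linarith) (by positivity)
  have hsv : (l - b) * (s * v) ≤ 0 := mul_nonpos_of_nonpos_of_nonneg (by linarith) (by positivity)
  have hp' : (θ - τ) * p ≤ 0 := mul_nonpos_of_nonpos_of_nonneg (by linarith) hp
  have hs' : (θ - μ) * s ≤ 0 := mul_nonpos_of_nonpos_of_nonneg (by linarith) hs
  have hi' : (θ - ν) * i ≤ 0 := mul_nonpos_of_nonpos_of_nonneg (by linarith) hi
  rw [hregroup]
  linarith [mul_sub_mul_sq_div_le (r + θ) v hr hK]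

theorem stmt8_general (g f τ l β q μ c ν r b K : ℝ)
    (hτ : 0 < τ) (hμ : 0 < μ) (hν : 0 < ν) (hr : 0 < r) (hK : 0 < K)
    (hgc : g < c) (hfq : f < q) (hlb : l < b)
    (P S I V : ℝ → ℝ)
    (hP : ∀ t, HasDerivAt P (P t * (g * I t + f * S t - τ)) t)
    (hS : ∀ t, HasDerivAt S (S t * (l * V t - β * I t - q * P t - μ)) t)
    (hI : ∀ t, HasDerivAt I (I t * (β * S t - c * P t - ν)) t)
    (hV : ∀ t, HasDerivAt V (V t * (r * (1 - V t / K) - b * S t)) t)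
    (hPpos : ∀ t, 0 ≤ t → 0 ≤ P t) (hSpos : ∀ t, 0 ≤ t → 0 ≤ S t)
    (hIpos : ∀ t, 0 ≤ t → 0 ≤ I t) (hVpos : ∀ t, 0 ≤ t → 0 ≤ V t)
    (W : ℝ → ℝ) (hW : W = fun t => P t + S t + I t + V t)
    (θ : ℝ) (hθ : θ = min τ (min μ ν))
    (Ψstar : ℝ) (hΨ : Ψstar = (r + θ) ^ 2 * K / (4 * r)) :
    (0 < θ) ∧
    (∀ t, 0 ≤ t → deriv W t + θ * W t ≤ Ψstar) ∧
    (∀ t, 0 ≤ t → W t ≤ max (W 0) (Ψstar / θ)) := by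
  have hθpos : 0 < θ := hθ ▸ lt_min hτ (lt_min hμ hν)
  have hθτ : θ ≤ τ := hθ ▸ min_le_left _ _
  have hθμ : θ ≤ μ := hθ ▸ (min_le_right _ _).trans (min_le_left _ _)
  have hθν : θ ≤ ν := hθ ▸ (min_le_right _ _).trans (min_le_right _ _)
  have hW' : ∀ t, HasDerivAt W (P t * (g * I t + f * S t - τ) +
      S t * (l * V t - β * I t - q * P t - μ) + I t * (β * S t - c * P t - ν) +
      V t * (r * (1 - V t / K) - b * S t)) t :=
    fun t => hW ▸ (((hP t).add (hS t)).add (hI t)).add (hV t)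
  have hbound : ∀ t, 0 ≤ t → deriv W t + θ * W t ≤ Ψstar := fun t ht => by
    rw [(hW' t).deriv, hΨ, hW]
    exact ecoepidemic_total_rate_add_mul_le hgc.le hfq.le hlb.le hθτ hθμ hθν hr hK
      (hPpos t ht) (hSpos t ht) (hIpos t ht) (hVpos t ht)
  exact ⟨hθpos, hbound, fun t ht => le_max_of_hasDerivAt_add_mul_le hθpos
    (fun s _ => (hW' s).differentiableAt.hasDerivAt) hbound ht⟩

theorem stmt8 (g f τ l β q μ c ν r b K : ℝ)
    (hg : 0 < g) (hf : 0 < f) (hτ : 0 < τ) (hl : 0 < l) (hβ : 0 < β)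
    (hq : 0 < q) (hμ : 0 < μ) (hc : 0 < c) (hν : 0 < ν) (hr : 0 < r) (hb : 0 < b)
    (hK : 0 < K) (hgc : g < c) (hfq : f < q) (hlb : l < b)
    (P S I V : ℝ → ℝ)
    (hP : ∀ t, HasDerivAt P (P t * (g * I t + f * S t - τ)) t)
    (hS : ∀ t, HasDerivAt S (S t * (l * V t - β * I t - q * P t - μ)) t)
    (hI : ∀ t, HasDerivAt I (I t * (β * S t - c * P t - ν)) t)
    (hV : ∀ t, HasDerivAt V (V t * (r * (1 - V t / K) - b * S t)) t)
    (hPpos : ∀ t, 0 ≤ t → 0 ≤ P t) (hSpos : ∀ t, 0 ≤ t → 0 ≤ S t)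
    (hIpos : ∀ t, 0 ≤ t → 0 ≤ I t) (hVpos : ∀ t, 0 ≤ t → 0 ≤ V t)
    (W : ℝ → ℝ) (hW : W = fun t => P t + S t + I t + V t)
    (θ : ℝ) (hθ : θ = min τ (min μ ν))
    (Ψstar : ℝ) (hΨ : Ψstar = (r + θ) ^ 2 * K / (4 * r)) :
    (0 < θ) ∧
    (∀ t, 0 ≤ t → deriv W t + θ * W t ≤ Ψstar) ∧
    (∀ t, 0 ≤ t → W t ≤ max (W 0) (Ψstar / θ)) :=
  stmt8_general g f τ l β q μ c ν r b K hτ hμ hν hr hK hgc hfq hlb P S I V hP hS hI hV hPpos hSpos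
    hIpos hVpos W hW θ hθ Ψstar hΨ
end

section
/- In the disease-free logistic model, the characteristic polynomial of the Jacobian at the coexistence equilibrium D* is λ³ + A₁λ² + A₂λ + A₃ with A₁ = (r/K)V*, A₂ = fqP*Q* + blQ*V*, A₃ = fq(r/K)P*Q*V*; whenever P*, Q*, V* > 0, the Routh–Hurwitz conditions A₁ > 0, A₃ > 0, A₁A₂ > A₃ hold, so D* is linearly asymptotically stable. -/
/-!
At the coexistence equilibrium the diagonal entries of the Jacobian for `P` and `Q` vanish
(they are the per-capita growth rates, which are zero there), so the Jacobian has the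
tridiagonal shape `[[0, a, 0], [-b, 0, c], [0, -d, -e]]` with `a, b, c, d, e > 0`. Its
characteristic polynomial is `λ³ + e λ² + (ab + cd) λ + abe`, and the Routh–Hurwitz
quantity `A₁A₂ - A₃ = cde` is positive.
-/

open Polynomial

noncomputable def dfRHS (f τ l q μ r K b : ℝ) (x : Fin 3 → ℝ) : Fin 3 → ℝ :=
  ![x 0 * (f * x 1 - τ),
    x 1 * (l * x 2 - q * x 0 - μ),
    x 2 * (r * (1 - x 2 / K) - b * x 1)]

noncomputable def dfJac (f τ l q μ r K b : ℝ) (x : Fin 3 → ℝ) :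
    Matrix (Fin 3) (Fin 3) ℝ :=
  Matrix.of ![
    ![f * x 1 - τ, f * x 0, 0],
    ![-(q * x 1), l * x 2 - q * x 0 - μ, l * x 1],
    ![0, -(b * x 2), r * (1 - x 2 / K) - b * x 1 - r * x 2 / K]]

/-- A root with `x = re z ≥ 0` is impossible: if it is real, all terms are nonnegative
and `a₃ > 0`; otherwise the imaginary part gives `y² = 3x² + 2a₁x + a₂`, and substituting
into the real part yields `a₃ - a₁a₂ = 8x³ + 8a₁x² + 2a₁²x + 2a₂x ≥ 0`. -/
theorem Complex.re_neg_of_cubic_eq_zero {a₁ a₂ a₃ : ℝ} (h₁ : 0 < a₁) (h₃ : 0 < a₃)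
    (h₁₂ : a₃ < a₁ * a₂) {z : ℂ} (hz : z ^ 3 + a₁ * z ^ 2 + a₂ * z + a₃ = 0) : z.re < 0 := by
  have h₂ : 0 < a₂ := pos_of_mul_pos_right (h₃.trans h₁₂) h₁.le
  obtain ⟨x, y⟩ := z
  have hre' := congrArg re hz
  have him' := congrArg im hz
  simp only [pow_succ, pow_zero, one_mul, add_re, add_im, mul_re, mul_im, ofReal_re, ofReal_im,
    zero_mul, sub_zero, add_zero, zero_re, zero_im] at hre' him'
  have hre : x ^ 3 - 3 * x * y ^ 2 + a₁ * (x ^ 2 - y ^ 2) + a₂ * x + a₃ = 0 := by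
    linear_combination hre'
  have him : y * (3 * x ^ 2 - y ^ 2 + 2 * a₁ * x + a₂) = 0 := by
    linear_combination him'
  change x < 0
  by_contra! hx
  rcases mul_eq_zero.1 him with rfl | hy
  · nlinarith [pow_nonneg hx 3, mul_nonneg h₁.le (sq_nonneg x), mul_nonneg h₂.le hx]
  · have hy2 : y ^ 2 = 3 * x ^ 2 + 2 * a₁ * x + a₂ := by linear_combination -hy
    have : a₃ - a₁ * a₂ = 8 * x ^ 3 + 8 * a₁ * x ^ 2 + 2 * a₁ ^ 2 * x + 2 * a₂ * x := by
      linear_combination hre + (3 * x + a₁) * hy2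
    nlinarith [pow_nonneg hx 3, mul_nonneg h₁.le (sq_nonneg x), mul_nonneg h₂.le hx,
      mul_nonneg (sq_nonneg a₁) hx]

theorem Complex.re_neg_of_mem_roots_cubic {a₁ a₂ a₃ : ℝ} (h₁ : 0 < a₁) (h₃ : 0 < a₃)
    (h₁₂ : a₃ < a₁ * a₂) {z : ℂ}
    (hz : z ∈ ((X ^ 3 + C a₁ * X ^ 2 + C a₂ * X + C a₃ : ℝ[X]).map Complex.ofRealHom).roots) :
    z.re < 0 := by
  refine re_neg_of_cubic_eq_zero h₁ h₃ h₁₂ ?_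
  simpa [IsRoot, eval_map] using (mem_roots'.1 hz).2

theorem Matrix.charpoly_tridiagonal_fin_three {R : Type*} [CommRing R] (a b c d e : R) :
    (Matrix.of ![![0, a, 0], ![-b, 0, c], ![0, -d, -e]]).charpoly =
      X ^ 3 + C e * X ^ 2 + C (a * b + c * d) * X + C (a * b * e) := by
  rw [Matrix.charpoly, Matrix.det_fin_three]
  simp only [Fin.isValue, charmatrix_apply_eq, of_apply, cons_val', cons_val_zero,
    cons_val_fin_one, map_zero, sub_zero, cons_val_one, cons_val, map_neg, sub_neg_eq_add, ne_eq,
    Fin.reduceEq, not_false_eq_true, charmatrix_apply_ne, mul_neg, X_mul_C, neg_neg, neg_mul,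
    neg_zero, mul_zero, add_zero, zero_mul, map_add, map_mul]
  ring

theorem dfJac_eq_of_equilibrium {f τ l q μ r K b P Q V : ℝ} (hP : f * Q = τ)
    (hQ : l * V - q * P = μ) (hV : r * (1 - V / K) = b * Q) :
    dfJac f τ l q μ r K b ![P, Q, V] =
      Matrix.of ![![0, f * P, 0], ![-(q * Q), 0, l * Q], ![0, -(b * V), -(r / K * V)]] := by
  ext i j
  fin_cases i <;> fin_cases j <;> simp [dfJac, hP, hQ, hV]; ring

theorem stmt15_general (f τ l q μ r K b : ℝ)
    (hf : 0 < f) (hl : 0 < l) (hq : 0 < q)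
    (hr : 0 < r) (hK : 0 < K) (hb : 0 < b)
    (Pstar Qstar Vstar : ℝ)
    (hPs : Pstar = (l * K * (1 - b * τ / (r * f)) - μ) / q)
    (hQs : Qstar = τ / f) (hVs : Vstar = K * (1 - b * τ / (r * f)))
    (hpos : 0 < Pstar ∧ 0 < Qstar ∧ 0 < Vstar)
    (A₁ A₂ A₃ : ℝ)
    (hA1 : A₁ = r / K * Vstar)
    (hA2 : A₂ = f * q * Pstar * Qstar + b * l * Qstar * Vstar)
    (hA3 : A₃ = f * q * (r / K) * Pstar * Qstar * Vstar) :
    (dfJac f τ l q μ r K b ![Pstar, Qstar, Vstar]).charpoly =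
      X ^ 3 + C A₁ * X ^ 2 + C A₂ * X + C A₃ ∧
    0 < A₁ ∧ 0 < A₃ ∧ A₃ < A₁ * A₂ ∧
    (∀ z ∈ ((dfJac f τ l q μ r K b ![Pstar, Qstar, Vstar]).map
        (Complex.ofReal)).charpoly.roots, z.re < 0) := by
  obtain ⟨hP, hQ, hV⟩ := hpos
  have hJ := dfJac_eq_of_equilibrium (l := l) (q := q) (r := r) (K := K) (b := b)
    (show f * Qstar = τ by rw [hQs]; field_simp)
    (show l * Vstar - q * Pstar = μ by rw [hPs, hVs]; field_simp; ring)
    (show r * (1 - Vstar / K) = b * Qstar by rw [hVs, hQs]; field_simp; ring)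
  have hcp : (dfJac f τ l q μ r K b ![Pstar, Qstar, Vstar]).charpoly =
      X ^ 3 + C A₁ * X ^ 2 + C A₂ * X + C A₃ := by
    rw [hJ, Matrix.charpoly_tridiagonal_fin_three, hA1,
      show A₂ = f * Pstar * (q * Qstar) + l * Qstar * (b * Vstar) by rw [hA2]; ring,
      show A₃ = f * Pstar * (q * Qstar) * (r / K * Vstar) by rw [hA3]; ring]
  have hA₁ : 0 < A₁ := by rw [hA1]; positivity
  have hA₃ : 0 < A₃ := by rw [hA3]; positivity
  have hRH : A₃ < A₁ * A₂ := by
    have : A₁ * A₂ - A₃ = r / K * Vstar * (b * l * Qstar * Vstar) := by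
      rw [hA1, hA2, hA3]; ring
    rw [← sub_pos, this]
    positivity
  exact ⟨hcp, hA₁, hA₃, hRH, fun z hz =>
    Complex.re_neg_of_mem_roots_cubic hA₁ hA₃ hRH (by rwa [← hcp, ← Matrix.charpoly_map])⟩

theorem stmt15 (f τ l q μ r K b : ℝ)
    (hf : 0 < f) (hτ : 0 < τ) (hl : 0 < l) (hq : 0 < q) (hμ : 0 < μ)
    (hr : 0 < r) (hK : 0 < K) (hb : 0 < b)
    (Pstar Qstar Vstar : ℝ)
    (hPs : Pstar = (l * K * (1 - b * τ / (r * f)) - μ) / q)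
    (hQs : Qstar = τ / f) (hVs : Vstar = K * (1 - b * τ / (r * f)))
    (hpos : 0 < Pstar ∧ 0 < Qstar ∧ 0 < Vstar)
    (A₁ A₂ A₃ : ℝ)
    (hA1 : A₁ = r / K * Vstar)
    (hA2 : A₂ = f * q * Pstar * Qstar + b * l * Qstar * Vstar)
    (hA3 : A₃ = f * q * (r / K) * Pstar * Qstar * Vstar) :
    (dfJac f τ l q μ r K b ![Pstar, Qstar, Vstar]).charpoly =
      X ^ 3 + C A₁ * X ^ 2 + C A₂ * X + C A₃ ∧
    0 < A₁ ∧ 0 < A₃ ∧ A₃ < A₁ * A₂ ∧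
    (∀ z ∈ ((dfJac f τ l q μ r K b ![Pstar, Qstar, Vstar]).map
        (Complex.ofReal)).charpoly.roots, z.re < 0) :=
  stmt15_general f τ l q μ r K b hf hl hq hr hK hb Pstar Qstar Vstar hPs hQs hVs hpos A₁ A₂ A₃ hA1
    hA2 hA3
end

section
/- For a monic cubic real polynomial λ³ + A₁λ² + A₂λ + A₃ with A₁ > 0, A₂ > 0, A₃ > 0 and A₁A₂ > A₃, all roots have negative real part (Routh–Hurwitz criterion for degree 3). -/
/-!
Write `z = x + iy` with `x ≥ 0` and split the cubic into real and imaginary parts. The imaginary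
part is `y (3x² - y² + 2A₁x + A₂)`. If `y = 0`, then `x` is a nonnegative real root of a cubic
with positive coefficients, which is impossible. Otherwise `y² = 3x² + 2A₁x + A₂`, and substituting
this into the real part leaves `8x³ + 8A₁x² + 2(A₁² + A₂)x + (A₁A₂ - A₃) = 0`, whose left side is
positive for `x ≥ 0` exactly because `A₁A₂ > A₃`.
-/

namespace Complex

theorem re_monic_cubic (a b c : ℝ) (z : ℂ) :
    (z ^ 3 + a * z ^ 2 + b * z + c).re =
      z.re ^ 3 - 3 * z.re * z.im ^ 2 + a * (z.re ^ 2 - z.im ^ 2) + b * z.re + c := by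
  simp only [pow_succ, pow_zero, one_mul, add_re, mul_re, mul_im, ofReal_re, ofReal_im]
  ring

theorem im_monic_cubic (a b c : ℝ) (z : ℂ) :
    (z ^ 3 + a * z ^ 2 + b * z + c).im =
      z.im * (3 * z.re ^ 2 - z.im ^ 2 + 2 * a * z.re + b) := by
  simp only [pow_succ, pow_zero, one_mul, add_im, mul_re, mul_im, ofReal_re, ofReal_im]
  ring

end Complex

theorem stmt16 (A₁ A₂ A₃ : ℝ) (h1 : 0 < A₁) (h2 : 0 < A₂) (h3 : 0 < A₃)
    (h4 : A₃ < A₁ * A₂) :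
    ∀ z : ℂ, z ^ 3 + (A₁ : ℂ) * z ^ 2 + (A₂ : ℂ) * z + (A₃ : ℂ) = 0 → z.re < 0 := by
  intro z hz
  by_contra! hx
  have hre := Complex.re_monic_cubic A₁ A₂ A₃ z
  have him := Complex.im_monic_cubic A₁ A₂ A₃ z
  rw [hz, Complex.zero_re] at hre
  rw [hz, Complex.zero_im, eq_comm, mul_eq_zero] at him
  set x := z.re
  set y := z.im
  rcases him with hy | hq
  · have : 0 < x ^ 3 + A₁ * x ^ 2 + A₂ * x + A₃ := by positivity
    rw [hy] at hre
    linarith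
  · have hreduced : 8 * x ^ 3 + 8 * A₁ * x ^ 2 + 2 * (A₁ ^ 2 + A₂) * x + (A₁ * A₂ - A₃) = 0 := by
      linear_combination hre + (3 * x + A₁) * hq
    have : 0 ≤ 8 * x ^ 3 + 8 * A₁ * x ^ 2 + 2 * (A₁ ^ 2 + A₂) * x := by positivity
    linarith
end

section
/- In the disease-free logistic model, the top-predator-free equilibrium D̂ = (0, (r/b)(1 - μ/(lK)), μ/l) is feasible iff lK ≥ μ, and the Jacobian at D̂ has the eigenvalue f(r/b)(1 - μ/(lK)) - τ in the P-direction; hence D̂ is unstable when (fr/(bτ))(1 - μ/(lK)) > 1, the same condition under which the coexistence equilibrium D* is feasible (a transcritical bifurcation). -/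
/-!
At `D̂` the top predator is absent, so the `P`-row of the Jacobian is `(f Q̂ - τ, 0, 0)`: the
`P`-axis is invariant to first order and its diagonal entry is an eigenvalue. Writing that
eigenvalue as `τ (R₀ - 1)` with `R₀ = (f r / (b τ)) (1 - μ / (l K))` shows it is positive exactly
when `R₀ > 1`.
-/

open Polynomial

theorem Matrix.isRoot_charpoly_of_row_eq_zero {n R : Type*} [Fintype n] [DecidableEq n]
    [CommRing R] (M : Matrix n n R) (i : n) (h : ∀ j, j ≠ i → M i j = 0) :
    M.charpoly.IsRoot (M i i) := by
  rw [IsRoot, Matrix.eval_charpoly]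
  refine Matrix.det_eq_zero_of_row_eq_zero i fun j => ?_
  obtain rfl | hji := eq_or_ne j i
  · simp
  · simp [Matrix.scalar_apply, Matrix.diagonal_apply_ne _ hji.symm, h j hji]

theorem dfJac_row_zero_of_predator_free (f τ l q μ r K b Q V : ℝ) (j : Fin 3) (hj : j ≠ 0) :
    dfJac f τ l q μ r K b ![0, Q, V] 0 j = 0 := by
  fin_cases j <;> simp_all [dfJac]

theorem predatorFree_feasible_iff {l μ r K b : ℝ} (hl : 0 < l) (hμ : 0 < μ) (hr : 0 < r)
    (hK : 0 < K) (hb : 0 < b) :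
    (0 ≤ r / b * (1 - μ / (l * K)) ∧ 0 ≤ μ / l) ↔ μ ≤ l * K := by
  have hV : 0 ≤ μ / l := by positivity
  rw [mul_nonneg_iff_of_pos_left (div_pos hr hb), sub_nonneg, div_le_one (mul_pos hl hK)]
  exact and_iff_left hV

theorem predatorFree_eigenvalue_pos {f τ μ l r K b : ℝ} (hτ : 0 < τ) (hb : 0 < b)
    (h : 1 < f * r / (b * τ) * (1 - μ / (l * K))) :
    0 < f * (r / b) * (1 - μ / (l * K)) - τ := by
  have hsplit : f * (r / b) * (1 - μ / (l * K)) - τ =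
      τ * (f * r / (b * τ) * (1 - μ / (l * K)) - 1) := by
    field_simp
  rw [hsplit]
  exact mul_pos hτ (sub_pos.mpr h)

theorem stmt17_general (f τ l q μ r K b : ℝ)
    (hτ : 0 < τ) (hl : 0 < l) (hμ : 0 < μ)
    (hr : 0 < r) (hK : 0 < K) (hb : 0 < b)
    (Qhat Vhat : ℝ)
    (hQ : Qhat = (r / b) * (1 - μ / (l * K))) (hV : Vhat = μ / l) :
    ((0 ≤ Qhat ∧ 0 ≤ Vhat) ↔ μ ≤ l * K) ∧
    dfJac f τ l q μ r K b ![0, Qhat, Vhat] 0 0 = f * (r / b) * (1 - μ / (l * K)) - τ ∧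
    (dfJac f τ l q μ r K b ![0, Qhat, Vhat]).charpoly.IsRoot
      (f * (r / b) * (1 - μ / (l * K)) - τ) ∧
    (1 < (f * r / (b * τ)) * (1 - μ / (l * K)) →
      ∃ z : ℝ, 0 < z ∧ (dfJac f τ l q μ r K b ![0, Qhat, Vhat]).charpoly.IsRoot z) := by
  have hdiag : dfJac f τ l q μ r K b ![0, Qhat, Vhat] 0 0 =
      f * (r / b) * (1 - μ / (l * K)) - τ := by
    simp [dfJac, hQ, mul_assoc]
  have hroot : (dfJac f τ l q μ r K b ![0, Qhat, Vhat]).charpoly.IsRoot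
      (f * (r / b) * (1 - μ / (l * K)) - τ) :=
    hdiag ▸ Matrix.isRoot_charpoly_of_row_eq_zero _ 0
      (dfJac_row_zero_of_predator_free f τ l q μ r K b Qhat Vhat)
  subst hQ hV
  exact ⟨predatorFree_feasible_iff hl hμ hr hK hb, hdiag, hroot,
    fun h => ⟨_, predatorFree_eigenvalue_pos hτ hb h, hroot⟩⟩

theorem stmt17 (f τ l q μ r K b : ℝ)
    (hf : 0 < f) (hτ : 0 < τ) (hl : 0 < l) (hq : 0 < q) (hμ : 0 < μ)
    (hr : 0 < r) (hK : 0 < K) (hb : 0 < b)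
    (Qhat Vhat : ℝ)
    (hQ : Qhat = (r / b) * (1 - μ / (l * K))) (hV : Vhat = μ / l) :
    ((0 ≤ Qhat ∧ 0 ≤ Vhat) ↔ μ ≤ l * K) ∧
    dfJac f τ l q μ r K b ![0, Qhat, Vhat] 0 0 = f * (r / b) * (1 - μ / (l * K)) - τ ∧
    (dfJac f τ l q μ r K b ![0, Qhat, Vhat]).charpoly.IsRoot
      (f * (r / b) * (1 - μ / (l * K)) - τ) ∧
    (1 < (f * r / (b * τ)) * (1 - μ / (l * K)) →
      ∃ z : ℝ, 0 < z ∧ (dfJac f τ l q μ r K b ![0, Qhat, Vhat]).charpoly.IsRoot z) :=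
  stmt17_general f τ l q μ r K b hτ hl hμ hr hK hb Qhat Vhat hQ hV
end
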